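/- Let n = pk + q with p, k ≥ 2 and 0 ≤ q ≤ k−1 (so n ≥ 2k), let δ ≥ 1, and let γ_k ≥ 1 be an admissible Hermite bound for rank k. If B = (b_1, …, b_n) ∈ ℝ^{m×n} is a (δ,k)-slide-reduced (for n ≥ 2k) basis of a lattice L of rank n, then ‖b_1‖ ≤ (δ²γ_k)^{(n−1)/(2(k−1))} · vol(L)^{1/n}. -/

import Mathlib

noncomputable section

/-- Euclidean space `ℝ^m`. -/
abbrev Euc (m : ℕ) : Type := EuclideanSpace ℝ (Fin m)

variable {m : ℕ}

/-- `projGS B s` is the orthogonal projection `π_{s+1}` onto the subspace orthogonal to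
`b_1, …, b_s` (0-based: orthogonal to `B 0, …, B (s-1)`). -/
def projGS (B : ℕ → Euc m) (s : ℕ) (x : Euc m) : Euc m :=
  (Submodule.orthogonalProjectionOnto ((Submodule.span ℝ (B '' Set.Iio s))ᗮ) x : Euc m)

/-- The Gram–Schmidt vector `b*_{i+1}` (0-based index `i`). -/
def gsoVec (B : ℕ → Euc m) (i : ℕ) : Euc m := projGS B i (B i)

/-- The projected block `B_{[s+1, s+ℓ]}` (0-based start `s`; the length is supplied
separately to the predicates below). -/
def block (B : ℕ → Euc m) (s : ℕ) : ℕ → Euc m := fun t => projGS B s (B (s + t))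

/-- Gram matrix of the first `ℓ` vectors. -/
def gram (B : ℕ → Euc m) (ℓ : ℕ) : Matrix (Fin ℓ) (Fin ℓ) ℝ :=
  Matrix.of fun i j => (inner ℝ (B i) (B j) : ℝ)

/-- `vol(L(B)) = det(BᵀB)^{1/2}` for the first `ℓ` vectors. -/
def volB (B : ℕ → Euc m) (ℓ : ℕ) : ℝ := Real.sqrt (gram B ℓ).det

/-- The lattice generated by the first `ℓ` vectors. -/
def latticeSpan (B : ℕ → Euc m) (ℓ : ℕ) : Submodule ℤ (Euc m) :=
  Submodule.span ℤ (B '' Set.Iio ℓ)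

/-- `λ₁(L)`: the minimum norm of a nonzero lattice vector. -/
def lambda1 (L : Submodule ℤ (Euc m)) : ℝ :=
  sInf {r : ℝ | ∃ x ∈ L, x ≠ 0 ∧ ‖x‖ = r}

/-- `B` (of rank `ℓ`) is `δ`-SVP-reduced. -/
def SVPReduced (δ : ℝ) (B : ℕ → Euc m) (ℓ : ℕ) : Prop :=
  ‖B 0‖ ≤ δ * lambda1 (latticeSpan B ℓ)

/-- `B` (of rank `ℓ`) is `δ`-HSVP-reduced. -/
def HSVPReduced (δ : ℝ) (B : ℕ → Euc m) (ℓ : ℕ) : Prop :=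
  ‖B 0‖ ≤ δ * volB B ℓ ^ ((1 : ℝ) / ℓ)

/-- The dual basis `B^× = B (BᵀB)⁻¹` of the first `ℓ` vectors (extended by `0`). -/
def dualFam (B : ℕ → Euc m) (ℓ : ℕ) : ℕ → Euc m := fun i =>
  if h : i < ℓ then ∑ j : Fin ℓ, ((gram B ℓ)⁻¹ j ⟨i, h⟩) • B j else 0

/-- The reversed dual basis `B^{-s}`. -/
def revDual (B : ℕ → Euc m) (ℓ : ℕ) : ℕ → Euc m := fun i => dualFam B ℓ (ℓ - 1 - i)

/-- `B` (of rank `ℓ`) is `δ`-DHSVP-reduced: its reversed dual basis is `δ`-HSVP-reduced. -/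
def DHSVPReduced (δ : ℝ) (B : ℕ → Euc m) (ℓ : ℕ) : Prop :=
  HSVPReduced δ (revDual B ℓ) ℓ

/-- `B = (b_1, …, b_{d+1})` is `δ`-twin-reduced: `B_{[1,d]}` is `δ`-HSVP-reduced and
`B_{[2,d+1]}` is `δ`-DHSVP-reduced. -/
def TwinReduced (δ : ℝ) (B : ℕ → Euc m) (d : ℕ) : Prop :=
  HSVPReduced δ (block B 0) d ∧ DHSVPReduced δ (block B 1) d

/-- Gram–Schmidt coefficient `μ_{i,j}` (0-based). -/
def mu (B : ℕ → Euc m) (i j : ℕ) : ℝ :=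
  (inner ℝ (B i) (gsoVec B j) : ℝ) / ‖gsoVec B j‖ ^ 2

/-- The first `ℓ` vectors are size-reduced. -/
def SizeReduced (B : ℕ → Euc m) (ℓ : ℕ) : Prop :=
  ∀ i j, j < i → i < ℓ → |mu B i j| ≤ 1 / 2

/-- The first `ℓ` vectors are `ε`-LLL-reduced. -/
def LLLReduced (ε : ℝ) (B : ℕ → Euc m) (ℓ : ℕ) : Prop :=
  SizeReduced B ℓ ∧
    ∀ i, 0 < i → i < ℓ →
      ‖gsoVec B (i - 1)‖ ^ 2 ≤ (1 + ε) * ‖mu B i (i - 1) • gsoVec B (i - 1) + gsoVec B i‖ ^ 2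

/-- `B` (of rank `ℓ`) is `δ`-DSVP-reduced: its reversed dual basis is `δ`-SVP-reduced
and `B` is `(1/3)`-LLL-reduced. -/
def DSVPReduced (δ : ℝ) (B : ℕ → Euc m) (ℓ : ℕ) : Prop :=
  SVPReduced δ (revDual B ℓ) ℓ ∧ LLLReduced (1 / 3) B ℓ

/-- `γ` is an admissible Hermite bound for rank `r`: every lattice generated by `r`
linearly independent vectors of a Euclidean space satisfies `λ₁² ≤ γ · vol^{2/r}`. -/
def IsHermiteBound (γ : ℝ) (r : ℕ) : Prop :=
  ∀ (m' : ℕ) (v : ℕ → Euc m'), LinearIndependent ℝ (fun i : Fin r => v i) →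
    lambda1 (latticeSpan v r) ^ 2 ≤ γ * volB v r ^ ((2 : ℝ) / r)


/-- Slide reduction for `n = pk + q ≥ 2k` (`p, k ≥ 2`, `0 ≤ q ≤ k-1`): with
`η := (δ²γ_k)^{(k+q-1)/(2(k-1))}`, the basis `B` is `(δ,k)`-slide-reduced if it is
size-reduced, `B_{[1,k+q]}` is `η`-HSVP-reduced, `B_{[2,k+q+1]}` is `η`-DHSVP-reduced,
`B_{[ik+q+1,(i+1)k+q]}` is `δ`-SVP-reduced for `i ∈ [1,p-1]`, and
`B_{[ik+q+2,(i+1)k+q+1]}` is `δ`-DSVP-reduced for `i ∈ [1,p-2]`. -/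
def SlideReducedBig {m : ℕ} (δ γk : ℝ) (k q p : ℕ) (B : ℕ → Euc m) : Prop :=
  SizeReduced B (p * k + q) ∧
    HSVPReduced ((δ ^ 2 * γk) ^ (((k : ℝ) + q - 1) / (2 * ((k : ℝ) - 1)))) (block B 0) (k + q) ∧
    DHSVPReduced ((δ ^ 2 * γk) ^ (((k : ℝ) + q - 1) / (2 * ((k : ℝ) - 1)))) (block B 1) (k + q) ∧
    (∀ i, 1 ≤ i → i ≤ p - 1 → SVPReduced δ (block B (i * k + q)) k) ∧
    (∀ i, 1 ≤ i → i ≤ p - 2 → DSVPReduced δ (block B (i * k + q + 1)) k)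

/-!
Write `x i = log ‖b*_{i+1}‖`. The volume of a projected block is the product of its
Gram–Schmidt norms, and the first vector of its reversed dual basis has norm `1 / ‖b*_last‖`.
Hence, with `c = log (δ²γ_k) / (k - 1)`, the HSVP condition on a block `[a, a + ℓ)` with factor
`exp ((ℓ - 1) c / 2)` reads `ℓ x_a ≤ ℓ (ℓ - 1) c / 2 + ∑ x_{a+j}`, and the DHSVP condition reads
`∑ x_{a+j} ≤ ℓ (ℓ - 1) c / 2 + ℓ x_{a+ℓ-1}`; the SVP and DSVP conditions on the blocks of size `k`
become such conditions with factor `δ √γ_k = exp ((k - 1) c / 2)` through the Hermite bound.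
A primal block at `a` together with the dual block at `a + 1` gives `x_a ≤ ℓ c + x_{a+ℓ}`.
Chaining these across the blocks of sizes `k + q, k, …, k` gives `x_0 ≤ N c + x_N` at every block
boundary `N`, and adding the primal block conditions then yields
`n x_0 ≤ n (n - 1) c / 2 + ∑_{i<n} x_i`, which is the claim since `vol L = ∏ ‖b*_i‖`.
-/

open Submodule InnerProductSpace Finset
open scoped Matrix RealInnerProductSpace

lemma mem_orthogonal_span_of_forall_inner {E : Type*} [NormedAddCommGroup E]
    [InnerProductSpace ℝ E] {S : Set E} {v : E} (h : ∀ u ∈ S, ⟪u, v⟫_ℝ = 0) :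
    v ∈ (span ℝ S)ᗮ :=
  (isOrtho_span.mpr fun u hu _ hw => (Set.mem_singleton_iff.mp hw) ▸ h u hu).ge
    (mem_span_singleton_self v)

lemma eq_of_sub_mem_span_of_inner_eq {E : Type*} [NormedAddCommGroup E] [InnerProductSpace ℝ E]
    {S : Set E} {x y : E} (hmem : x - y ∈ span ℝ S) (h : ∀ u ∈ S, ⟪u, x⟫_ℝ = ⟪u, y⟫_ℝ) : x = y := by
  have hperp : x - y ∈ (span ℝ S)ᗮ :=
    mem_orthogonal_span_of_forall_inner fun u hu => by rw [inner_sub_right, h u hu, sub_self]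
  exact sub_eq_zero.mp (inner_self_eq_zero.mp (inner_right_of_mem_orthogonal hmem hperp))

theorem Matrix.gram_sum_smul {E ι κ : Type*} [NormedAddCommGroup E] [InnerProductSpace ℝ E]
    [Fintype ι] (v : ι → E) (M : Matrix κ ι ℝ) :
    Matrix.gram ℝ (fun i => ∑ j, M i j • v j) = M * Matrix.gram ℝ v * Mᵀ := by
  ext i j
  simp only [Matrix.gram_apply, sum_inner, inner_sum, real_inner_smul_left, real_inner_smul_right,
    Matrix.mul_apply, Matrix.transpose_apply, Finset.sum_mul]
  exact sum_congr rfl fun _ _ => sum_congr rfl fun _ _ => by ring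

theorem Matrix.gram_eq_diagonal_of_orthogonal {E ι : Type*} [NormedAddCommGroup E]
    [InnerProductSpace ℝ E] [DecidableEq ι] {v : ι → E} (hv : Pairwise fun i j => ⟪v i, v j⟫_ℝ = 0) :
    Matrix.gram ℝ v = Matrix.diagonal fun i => ‖v i‖ ^ 2 := by
  ext i j
  rcases eq_or_ne i j with rfl | hij
  · simp
  · simp [hv hij, hij]

lemma le_mul_rpow_iff_log_le {a η V t : ℝ} (ha : 0 < a) (hη : 0 < η) (hV : 0 < V) :
    a ≤ η * V ^ t ↔ Real.log a ≤ Real.log η + t * Real.log V := by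
  rw [← Real.log_rpow hV, ← Real.log_mul hη.ne' (Real.rpow_pos_of_pos hV t).ne',
    Real.log_le_log_iff ha (by positivity)]

lemma mul_average_add {ℓ : ℝ} (hℓ : ℓ ≠ 0) (c S : ℝ) :
    ℓ * ((ℓ - 1) / 2 * c + 1 / ℓ * S) = ℓ * (ℓ - 1) / 2 * c + S := by
  field_simp

lemma log_rpow_sub_one_div {σ κ : ℝ} (hσ : 0 < σ) (hκ : κ ≠ 0) (r : ℝ) :
    Real.log (σ ^ ((r - 1) / (2 * κ))) = (r - 1) / 2 * (Real.log σ / κ) := by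
  rw [Real.log_rpow hσ]
  field_simp

lemma log_mul_sqrt {δ γ κ : ℝ} (hδ : 0 < δ) (hγ : 0 < γ) (hκ : κ ≠ 0) :
    Real.log (δ * √γ) = κ / 2 * (Real.log (δ ^ 2 * γ) / κ) := by
  rw [Real.log_mul hδ.ne' (Real.sqrt_pos.mpr hγ).ne', Real.log_sqrt hγ.le,
    Real.log_mul (by positivity) hγ.ne', Real.log_pow]
  field_simp
  ring

lemma sub_one_ne_zero_of_two_le {k : ℕ} (hk : 2 ≤ k) : (k : ℝ) - 1 ≠ 0 := by
  have : (2 : ℝ) ≤ k := by exact_mod_cast hk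
  linarith

section GramSchmidt

variable {B : ℕ → Euc m}

lemma span_image_Iio_mono {a b : ℕ} (hab : a ≤ b) :
    span ℝ (B '' Set.Iio a) ≤ span ℝ (B '' Set.Iio b) :=
  span_mono (Set.image_mono (Set.Iio_subset_Iio hab))

lemma projGS_eq_of {s : ℕ} {x y : Euc m} (hy : y ∈ (span ℝ (B '' Set.Iio s))ᗮ)
    (hxy : x - y ∈ span ℝ (B '' Set.Iio s)) : projGS B s x = y :=
  eq_starProjection_of_mem_orthogonal hy (le_orthogonal_orthogonal _ hxy)

lemma projGS_sub (B : ℕ → Euc m) (s : ℕ) (x y : Euc m) :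
    projGS B s (x - y) = projGS B s x - projGS B s y :=
  map_sub (span ℝ (B '' Set.Iio s))ᗮ.starProjection x y

lemma projGS_mem_orthogonal (B : ℕ → Euc m) (s : ℕ) (x : Euc m) :
    projGS B s x ∈ (span ℝ (B '' Set.Iio s))ᗮ :=
  starProjection_apply_mem _ x

lemma sub_projGS_mem_span (B : ℕ → Euc m) (s : ℕ) (x : Euc m) :
    x - projGS B s x ∈ span ℝ (B '' Set.Iio s) := by
  rw [projGS, ← starProjection_apply, starProjection_orthogonal_val, sub_sub_cancel]
  exact starProjection_apply_mem _ x

theorem gsoVec_eq_gramSchmidt (B : ℕ → Euc m) (i : ℕ) : gsoVec B i = gramSchmidt ℝ B i := by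
  refine projGS_eq_of (mem_orthogonal_span_of_forall_inner ?_) ?_
  · rintro _ ⟨j, hj, rfl⟩
    rw [real_inner_comm]
    exact gramSchmidt_inv_triangular ℝ B hj
  · rw [← span_gramSchmidt_Iio ℝ B i]
    nth_rewrite 1 [gramSchmidt_def' ℝ B i]
    rw [add_sub_cancel_left]
    refine sum_mem fun j hj => ?_
    have hle : (ℝ ∙ gramSchmidt ℝ B j) ≤ span ℝ (gramSchmidt ℝ B '' Set.Iio i) :=
      span_mono (Set.singleton_subset_iff.mpr (Set.mem_image_of_mem _ (Finset.mem_Iio.mp hj)))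
    exact hle (starProjection_apply_mem _ _)

lemma gsoVec_ne_zero {n : ℕ} (hB : LinearIndependent ℝ (fun i : Fin n => B i)) {i : ℕ}
    (hi : i < n) : gsoVec B i ≠ 0 := by
  rw [gsoVec_eq_gramSchmidt]
  let toFin : Set.Iic i → Fin n := fun j => ⟨j, lt_of_le_of_lt j.2 hi⟩
  exact gramSchmidt_ne_zero_coe i
    (hB.comp toFin fun a b h => Subtype.ext (congrArg Fin.val h))

end GramSchmidt

section Block

variable {B : ℕ → Euc m}

lemma block_zero (B : ℕ → Euc m) : block B 0 = B := by
  funext t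
  refine projGS_eq_of ?_ ?_ <;> simp

lemma span_block_le (B : ℕ → Euc m) (s t : ℕ) :
    span ℝ (block B s '' Set.Iio t) ≤ span ℝ (B '' Set.Iio (s + t)) := by
  rw [span_le]
  rintro _ ⟨u, hu, rfl⟩
  have hB : B (s + u) ∈ span ℝ (B '' Set.Iio (s + t)) :=
    subset_span ⟨s + u, by simpa using hu, rfl⟩
  show projGS B s (B (s + u)) ∈ _
  simpa using sub_mem hB (span_image_Iio_mono (by omega) (sub_projGS_mem_span B s (B (s + u))))

lemma projGS_mem_span_block {s t : ℕ} {x : Euc m} (hx : x ∈ span ℝ (B '' Set.Iio (s + t))) :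
    projGS B s x ∈ span ℝ (block B s '' Set.Iio t) := by
  let P : Euc m →ₗ[ℝ] Euc m := (span ℝ (B '' Set.Iio s))ᗮ.starProjection
  suffices span ℝ (B '' Set.Iio (s + t)) ≤ (span ℝ (block B s '' Set.Iio t)).comap P from this hx
  rw [span_le]
  rintro _ ⟨j, hj, rfl⟩
  rcases lt_or_ge j s with hjs | hjs
  · have hzero : projGS B s (B j) = 0 :=
      projGS_eq_of (zero_mem _) (by rw [sub_zero]; exact subset_span ⟨j, hjs, rfl⟩)
    rw [SetLike.mem_coe, mem_comap]
    show projGS B s (B j) ∈ _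
    exact hzero ▸ zero_mem _
  · obtain ⟨u, rfl⟩ := Nat.exists_eq_add_of_le hjs
    exact subset_span ⟨u, by simp only [Set.mem_Iio] at hj ⊢; omega, rfl⟩

theorem gsoVec_block (B : ℕ → Euc m) (s t : ℕ) : gsoVec (block B s) t = gsoVec B (s + t) := by
  set g := gsoVec B (s + t)
  have hg : g ∈ (span ℝ (B '' Set.Iio (s + t)))ᗮ := projGS_mem_orthogonal B _ _
  have hgs : projGS B s g = g :=
    projGS_eq_of (orthogonal_le (span_image_Iio_mono (by omega)) hg) (by simp)
  refine projGS_eq_of (orthogonal_le (span_block_le B s t) hg) ?_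
  have hsub : projGS B s (B (s + t) - g) = block B s t - g := by
    rw [projGS_sub, hgs]
    rfl
  rw [← hsub]
  exact projGS_mem_span_block (sub_projGS_mem_span B _ _)

end Block

section Volume

variable {B : ℕ → Euc m}

lemma gram_eq_matrixGram (B : ℕ → Euc m) (ℓ : ℕ) :
    gram B ℓ = Matrix.gram ℝ (fun i : Fin ℓ => B i) :=
  rfl

lemma inner_gsoVec_eq_zero_of_lt {i j : ℕ} (h : i < j) : ⟪B i, gsoVec B j⟫_ℝ = 0 := by
  rw [gsoVec_eq_gramSchmidt, real_inner_comm]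
  exact gramSchmidt_inv_triangular ℝ B h

lemma inner_gsoVec_self (B : ℕ → Euc m) (i : ℕ) : ⟪B i, gsoVec B i⟫_ℝ = ‖gsoVec B i‖ ^ 2 := by
  have h : ⟪B i - gsoVec B i, gsoVec B i⟫_ℝ = 0 :=
    inner_right_of_mem_orthogonal (sub_projGS_mem_span B i (B i)) (projGS_mem_orthogonal B i (B i))
  rw [inner_sub_left, sub_eq_zero] at h
  rw [h, real_inner_self_eq_norm_sq]

lemma gsoVec_mem_span (B : ℕ → Euc m) (i : ℕ) : gsoVec B i ∈ span ℝ (B '' Set.Iio (i + 1)) := by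
  rw [gsoVec_eq_gramSchmidt]
  exact span_mono (Set.image_mono fun j (hj : j ≤ i) => show j < i + 1 by omega)
    (gramSchmidt_mem_span ℝ B le_rfl)

lemma mu_eq_zero_of_lt {i j : ℕ} (h : i < j) : mu B i j = 0 := by
  rw [mu, inner_gsoVec_eq_zero_of_lt h, zero_div]

lemma mu_self {i : ℕ} (h : gsoVec B i ≠ 0) : mu B i i = 1 := by
  rw [mu, inner_gsoVec_self, div_self (by positivity)]

lemma sum_mu_smul_gsoVec {i ℓ : ℕ} (hi : i < ℓ) :
    ∑ j ∈ range ℓ, mu B i j • gsoVec B j = B i := by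
  have hself : mu B i i • gsoVec B i = gsoVec B i := by
    by_cases h : gsoVec B i = 0
    · simp [h]
    · rw [mu_self h, one_smul]
  have htail : ∀ j ∈ range ℓ, j ∉ range (i + 1) → mu B i j • gsoVec B j = 0 := fun j _ hj => by
    rw [mu_eq_zero_of_lt (by simpa using hj), zero_smul]
  rw [← sum_subset (range_subset_range.mpr hi) htail, sum_range_succ, hself]
  conv_rhs => rw [gramSchmidt_def'' ℝ B i]
  simp only [← gsoVec_eq_gramSchmidt, Nat.Iio_eq_range, mu, real_inner_comm (B i)]
  exact add_comm _ _

theorem det_gram_eq_prod {ℓ : ℕ} (hne : ∀ i < ℓ, gsoVec B i ≠ 0) :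
    (gram B ℓ).det = ∏ i : Fin ℓ, ‖gsoVec B i‖ ^ 2 := by
  let L : Matrix (Fin ℓ) (Fin ℓ) ℝ := Matrix.of fun i j => mu B i j
  have hexp : (fun i : Fin ℓ => B i) = fun i => ∑ j, L i j • gsoVec B j := by
    funext i
    rw [← sum_mu_smul_gsoVec (B := B) i.2,
      ← Fin.sum_univ_eq_sum_range (fun j => mu B i j • gsoVec B j)]
    rfl
  have hL : L.det = 1 := by
    rw [Matrix.det_of_isLowerTriangular L fun i j hij => mu_eq_zero_of_lt hij]
    exact prod_eq_one fun i _ => mu_self (hne i i.2)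
  have hdiag := Matrix.gram_eq_diagonal_of_orthogonal (v := fun i : Fin ℓ => gsoVec B i)
    fun i j hij => by
      dsimp only
      rw [gsoVec_eq_gramSchmidt, gsoVec_eq_gramSchmidt]
      exact gramSchmidt_orthogonal ℝ B (Fin.val_injective.ne hij)
  rw [gram_eq_matrixGram, hexp, Matrix.gram_sum_smul, hdiag, Matrix.det_mul, Matrix.det_mul,
    Matrix.det_transpose, hL, Matrix.det_diagonal, one_mul, mul_one]

lemma volB_eq_prod {ℓ : ℕ} (hne : ∀ i < ℓ, gsoVec B i ≠ 0) :
    volB B ℓ = ∏ i : Fin ℓ, ‖gsoVec B i‖ := by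
  rw [volB, det_gram_eq_prod hne, prod_pow, Real.sqrt_sq (prod_nonneg fun _ _ => norm_nonneg _)]

variable {n s ℓ : ℕ}

lemma det_gram_ne_zero (hne : ∀ i < ℓ, gsoVec B i ≠ 0) : (gram B ℓ).det ≠ 0 := by
  rw [det_gram_eq_prod hne]
  exact prod_ne_zero_iff.mpr fun i _ => pow_ne_zero 2 (norm_ne_zero_iff.mpr (hne i i.2))

lemma gsoVec_block_ne_zero (hB : LinearIndependent ℝ (fun i : Fin n => B i)) (hsl : s + ℓ ≤ n) :
    ∀ t < ℓ, gsoVec (block B s) t ≠ 0 := fun t ht => by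
  rw [gsoVec_block]
  exact gsoVec_ne_zero hB (by omega)

def logProfile (B : ℕ → Euc m) (i : ℕ) : ℝ := Real.log ‖gsoVec B i‖

lemma log_volB_block (hB : LinearIndependent ℝ (fun i : Fin n => B i)) (hsl : s + ℓ ≤ n) :
    Real.log (volB (block B s) ℓ) = ∑ j ∈ range ℓ, logProfile B (s + j) := by
  rw [volB_eq_prod (gsoVec_block_ne_zero hB hsl), Real.log_prod fun t _ =>
    norm_ne_zero_iff.mpr (gsoVec_block_ne_zero hB hsl t.1 t.2)]
  simp only [gsoVec_block]
  exact Fin.sum_univ_eq_sum_range (fun j => logProfile B (s + j)) ℓ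

lemma volB_block_pos (hB : LinearIndependent ℝ (fun i : Fin n => B i)) (hsl : s + ℓ ≤ n) :
    0 < volB (block B s) ℓ := by
  rw [volB_eq_prod (gsoVec_block_ne_zero hB hsl)]
  exact prod_pos fun t _ => norm_pos_iff.mpr (gsoVec_block_ne_zero hB hsl t t.2)

lemma linearIndependent_block (hB : LinearIndependent ℝ (fun i : Fin n => B i))
    (hsl : s + ℓ ≤ n) : LinearIndependent ℝ (fun i : Fin ℓ => block B s i) :=
  Matrix.linearIndependent_of_det_gram_ne_zero (det_gram_ne_zero (gsoVec_block_ne_zero hB hsl))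

end Volume

section Dual

variable {v : ℕ → Euc m} {ℓ : ℕ}

lemma dualFam_eq_sum (v : ℕ → Euc m) (ℓ : ℕ) (i : Fin ℓ) :
    dualFam v ℓ i = ∑ j : Fin ℓ, (gram v ℓ)⁻¹ j i • v j :=
  dif_pos i.2

lemma inner_dualFam (hdet : (gram v ℓ).det ≠ 0) {a i : ℕ} (ha : a < ℓ) (hi : i < ℓ) :
    ⟪v a, dualFam v ℓ i⟫_ℝ = if a = i then 1 else 0 := by
  have hinv := congrFun (congrFun (Matrix.mul_nonsing_inv _ (Ne.isUnit hdet)) ⟨a, ha⟩) ⟨i, hi⟩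
  rw [Matrix.mul_apply, Matrix.one_apply] at hinv
  rw [show dualFam v ℓ i = _ from dualFam_eq_sum v ℓ ⟨i, hi⟩, inner_sum]
  simpa [gram, real_inner_smul_right, mul_comm, Fin.ext_iff] using hinv

lemma gram_dualFam (hdet : (gram v ℓ).det ≠ 0) : gram (dualFam v ℓ) ℓ = (gram v ℓ)⁻¹ := by
  have hsymm : (gram v ℓ)ᵀ = gram v ℓ := Matrix.IsSymm.ext fun i j => real_inner_comm (v i) (v j)
  have hexp : (fun i : Fin ℓ => dualFam v ℓ i) = fun i => ∑ j, ((gram v ℓ)⁻¹)ᵀ i j • v j :=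
    funext (dualFam_eq_sum v ℓ)
  rw [gram_eq_matrixGram, hexp, Matrix.gram_sum_smul, ← gram_eq_matrixGram,
    Matrix.transpose_transpose, Matrix.transpose_nonsing_inv, hsymm,
    Matrix.nonsing_inv_mul _ (Ne.isUnit hdet), Matrix.one_mul]

lemma gram_revDual (v : ℕ → Euc m) (ℓ : ℕ) :
    gram (revDual v ℓ) ℓ = (gram (dualFam v ℓ) ℓ).submatrix Fin.revPerm Fin.revPerm := by
  ext i j
  simp only [gram, revDual, Matrix.of_apply, Matrix.submatrix_apply, Fin.revPerm_apply,
    Fin.val_rev]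
  rw [Nat.sub_sub, Nat.sub_sub, add_comm 1 (i : ℕ), add_comm 1 (j : ℕ)]

lemma det_gram_revDual (hdet : (gram v ℓ).det ≠ 0) :
    (gram (revDual v ℓ) ℓ).det = (gram v ℓ).det⁻¹ := by
  rw [gram_revDual, Matrix.det_submatrix_equiv_self, gram_dualFam hdet, Matrix.det_nonsing_inv,
    Ring.inverse_eq_inv']

lemma volB_revDual (hdet : (gram v ℓ).det ≠ 0) : volB (revDual v ℓ) ℓ = (volB v ℓ)⁻¹ := by
  rw [volB, volB, det_gram_revDual hdet, Real.sqrt_inv]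

lemma linearIndependent_revDual (hdet : (gram v ℓ).det ≠ 0) :
    LinearIndependent ℝ (fun i : Fin ℓ => revDual v ℓ i) :=
  Matrix.linearIndependent_of_det_gram_ne_zero (by
    rw [← gram_eq_matrixGram, det_gram_revDual hdet]
    exact inv_ne_zero hdet)

lemma dualFam_last (hℓ : 0 < ℓ) (hdet : (gram v ℓ).det ≠ 0) (hne : gsoVec v (ℓ - 1) ≠ 0) :
    dualFam v ℓ (ℓ - 1) = (‖gsoVec v (ℓ - 1)‖ ^ 2)⁻¹ • gsoVec v (ℓ - 1) := by
  refine eq_of_sub_mem_span_of_inner_eq (S := v '' Set.Iio ℓ) ?_ ?_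
  · refine sub_mem ?_ (smul_mem _ _ ?_)
    · rw [show dualFam v ℓ (ℓ - 1) = _ from dualFam_eq_sum v ℓ ⟨ℓ - 1, by omega⟩]
      exact sum_mem fun j _ => smul_mem _ _ (subset_span (Set.mem_image_of_mem v j.2))
    · simpa [Nat.sub_add_cancel hℓ] using gsoVec_mem_span v (ℓ - 1)
  · rintro _ ⟨j, hj, rfl⟩
    rw [inner_dualFam hdet hj (by omega), real_inner_smul_right]
    rcases (Nat.le_sub_one_of_lt hj).lt_or_eq with hlt | rfl
    · rw [if_neg hlt.ne, inner_gsoVec_eq_zero_of_lt hlt, mul_zero]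
    · rw [if_pos rfl, inner_gsoVec_self, inv_mul_cancel₀ (by positivity)]

lemma norm_revDual_zero (hℓ : 0 < ℓ) (hdet : (gram v ℓ).det ≠ 0) (hne : gsoVec v (ℓ - 1) ≠ 0) :
    ‖revDual v ℓ 0‖ = ‖gsoVec v (ℓ - 1)‖⁻¹ := by
  rw [revDual, Nat.sub_zero, dualFam_last hℓ hdet hne, norm_smul, norm_inv, norm_pow, norm_norm]
  field_simp

end Dual

theorem SVPReduced.hsvpReduced {v : ℕ → Euc m} {ℓ : ℕ} {δ γ : ℝ} (hH : IsHermiteBound γ ℓ)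
    (hv : LinearIndependent ℝ (fun i : Fin ℓ => v i)) (hδ : 0 ≤ δ) (h : SVPReduced δ v ℓ) :
    HSVPReduced (δ * √γ) v ℓ := by
  have hvol : 0 ≤ volB v ℓ := Real.sqrt_nonneg _
  have hmin : lambda1 (latticeSpan v ℓ) ≤ √γ * volB v ℓ ^ ((1 : ℝ) / ℓ) :=
    calc lambda1 (latticeSpan v ℓ) ≤ √(γ * volB v ℓ ^ ((2 : ℝ) / ℓ)) :=
          (le_abs_self _).trans (Real.abs_le_sqrt (hH m v hv))
      _ = √γ * volB v ℓ ^ ((1 : ℝ) / ℓ) := by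
          rw [Real.sqrt_mul' _ (by positivity), Real.sqrt_eq_rpow (volB v ℓ ^ _),
            ← Real.rpow_mul hvol]
          ring_nf
  calc ‖v 0‖ ≤ δ * lambda1 (latticeSpan v ℓ) := h
    _ ≤ δ * (√γ * volB v ℓ ^ ((1 : ℝ) / ℓ)) := mul_le_mul_of_nonneg_left hmin hδ
    _ = δ * √γ * volB v ℓ ^ ((1 : ℝ) / ℓ) := (mul_assoc _ _ _).symm

/-- With `x i = log ‖b*_{i+1}‖`, `ProfileHSVP` and `ProfileDHSVP` are `HSVPReduced` and
`DHSVPReduced` for the block `B_{[a+1, a+ℓ]}` with factor `exp ((ℓ - 1) c / 2)`, multiplied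
through by `ℓ`. -/
def ProfileHSVP (x : ℕ → ℝ) (c : ℝ) (a ℓ : ℕ) : Prop :=
  (ℓ : ℝ) * x a ≤ ℓ * (ℓ - 1) / 2 * c + ∑ j ∈ range ℓ, x (a + j)

def ProfileDHSVP (x : ℕ → ℝ) (c : ℝ) (a ℓ : ℕ) : Prop :=
  ∑ j ∈ range ℓ, x (a + j) ≤ ℓ * (ℓ - 1) / 2 * c + ℓ * x (a + ℓ - 1)

section Profile

variable {B : ℕ → Euc m} {n a ℓ : ℕ} {η c : ℝ}

theorem hsvpReduced_block_iff (hB : LinearIndependent ℝ (fun i : Fin n => B i))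
    (hsl : a + ℓ ≤ n) (hℓ : 0 < ℓ) (hη : 0 < η) (hlog : Real.log η = (ℓ - 1) / 2 * c) :
    HSVPReduced η (block B a) ℓ ↔ ProfileHSVP (logProfile B) c a ℓ := by
  have hℓ' : (0 : ℝ) < ℓ := by exact_mod_cast hℓ
  rw [HSVPReduced, show block B a 0 = gsoVec B a from rfl,
    le_mul_rpow_iff_log_le (norm_pos_iff.mpr (gsoVec_ne_zero hB (by omega))) hη
      (volB_block_pos hB hsl), hlog, log_volB_block hB hsl, ProfileHSVP,
    ← mul_le_mul_iff_right₀ hℓ', mul_average_add hℓ'.ne']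
  rfl

theorem DHSVPReduced.profileDHSVP (hB : LinearIndependent ℝ (fun i : Fin n => B i))
    (hsl : a + ℓ ≤ n) (hℓ : 0 < ℓ) (hη : 0 < η) (hlog : Real.log η = (ℓ - 1) / 2 * c)
    (h : DHSVPReduced η (block B a) ℓ) : ProfileDHSVP (logProfile B) c a ℓ := by
  have hℓ' : (0 : ℝ) < ℓ := by exact_mod_cast hℓ
  have hdet := det_gram_ne_zero (gsoVec_block_ne_zero hB hsl)
  have hlast := gsoVec_block_ne_zero hB hsl (ℓ - 1) (by omega)
  rw [DHSVPReduced, HSVPReduced, norm_revDual_zero hℓ hdet hlast, volB_revDual hdet,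
    le_mul_rpow_iff_log_le (inv_pos.mpr (norm_pos_iff.mpr hlast)) hη
      (inv_pos.mpr (volB_block_pos hB hsl)), Real.log_inv, Real.log_inv, hlog,
    log_volB_block hB hsl, gsoVec_block, ← mul_le_mul_iff_right₀ hℓ', mul_average_add hℓ'.ne',
    ← Nat.add_sub_assoc (show 1 ≤ ℓ from hℓ)] at h
  rw [ProfileDHSVP]
  unfold logProfile at h ⊢
  linarith

end Profile

section ProfileArithmetic

variable {x : ℕ → ℝ} {c : ℝ}

theorem ProfileHSVP.le_add_of_profileDHSVP {a ℓ : ℕ} (h : ProfileHSVP x c a ℓ)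
    (hdual : ProfileDHSVP x c (a + 1) ℓ) (hℓ : 1 < ℓ) : x a ≤ ℓ * c + x (a + ℓ) := by
  have hℓ' : (1 : ℝ) < ℓ := by exact_mod_cast hℓ
  have hshift : ∑ j ∈ range ℓ, x (a + 1 + j) = ∑ j ∈ range ℓ, x (a + j) - x a + x (a + ℓ) := by
    have hfront := sum_range_succ' (fun j => x (a + j)) ℓ
    have hback := sum_range_succ (fun j => x (a + j)) ℓ
    simp only [add_zero, ← add_assoc] at hfront
    simp only [add_right_comm a 1]
    linarith
  rw [ProfileHSVP] at h
  rw [ProfileDHSVP, hshift, show a + 1 + ℓ - 1 = a + ℓ by omega] at hdual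
  have key : (ℓ - 1 : ℝ) * x a ≤ (ℓ - 1) * (ℓ * c + x (a + ℓ)) := by linarith
  exact le_of_mul_le_mul_left key (by linarith)

theorem ProfileHSVP.add {N ℓ : ℕ} (hprefix : ProfileHSVP x c 0 N)
    (hchain : x 0 ≤ N * c + x N) (hblock : ProfileHSVP x c N ℓ) :
    ProfileHSVP x c 0 (N + ℓ) := by
  have hℓ : (0 : ℝ) ≤ ℓ := Nat.cast_nonneg ℓ
  have hscaled := mul_le_mul_of_nonneg_left hchain hℓ
  rw [ProfileHSVP] at hprefix hblock ⊢
  simp only [zero_add] at hprefix ⊢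
  rw [sum_range_add]
  push_cast
  nlinarith

theorem profileHSVP_of_twin_chain {d k T : ℕ} (hd : 1 < d) (hk : 1 < k)
    (hfirst : ProfileHSVP x c 0 d) (hfirstDual : ProfileDHSVP x c 1 d)
    (hprimal : ∀ t < T, ProfileHSVP x c (d + t * k) k)
    (hdual : ∀ t, t + 1 < T → ProfileDHSVP x c (d + t * k + 1) k) :
    ProfileHSVP x c 0 (d + T * k) := by
  have hchain : ∀ t < T, x 0 ≤ ((d + t * k : ℕ) : ℝ) * c + x (d + t * k) := by
    intro t
    induction t with
    | zero => intro _; simpa using hfirst.le_add_of_profileDHSVP hfirstDual hd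
    | succ t ih =>
      intro ht
      have := (hprimal t (by omega)).le_add_of_profileDHSVP (hdual t ht) hk
      rw [show d + (t + 1) * k = d + t * k + k by ring]
      push_cast at this ih ⊢
      linarith [ih (by omega)]
  have hprefix : ∀ t ≤ T, ProfileHSVP x c 0 (d + t * k) := by
    intro t
    induction t with
    | zero => intro _; simpa using hfirst
    | succ t ih =>
      intro ht
      rw [show d + (t + 1) * k = d + t * k + k by ring]
      exact (ih (by omega)).add (hchain t (by omega)) (hprimal t (by omega))
  exact hprefix T le_rfl

end ProfileArithmetic

theorem SlideReducedBig.profileHSVP {B : ℕ → Euc m} {k q p n : ℕ} (hp : 2 ≤ p) (hk : 2 ≤ k)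
    (hn : n = p * k + q) {δ γk : ℝ} (hδ : 0 < δ) (hγk : 0 < γk) (hHk : IsHermiteBound γk k)
    (hB : LinearIndependent ℝ (fun i : Fin n => B i)) (hslide : SlideReducedBig δ γk k q p B) :
    ProfileHSVP (logProfile B) (Real.log (δ ^ 2 * γk) / (k - 1)) 0 n := by
  obtain ⟨-, hfirst, hfirstDual, hsvp, hdsvp⟩ := hslide
  set c := Real.log (δ ^ 2 * γk) / (k - 1)
  have hk1 := sub_one_ne_zero_of_two_le hk
  have hlogη : Real.log ((δ ^ 2 * γk) ^ (((k : ℝ) + q - 1) / (2 * ((k : ℝ) - 1)))) =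
      (((k + q : ℕ) : ℝ) - 1) / 2 * c := by
    rw [log_rpow_sub_one_div (by positivity) hk1]
    push_cast
    rfl
  have hlogδγ : Real.log (δ * √γk) = ((k : ℝ) - 1) / 2 * c := log_mul_sqrt hδ hγk hk1
  have hlen : k + q + (p - 1) * k = n := by
    obtain ⟨p', rfl⟩ : ∃ p', p = p' + 1 := ⟨p - 1, by omega⟩
    rw [hn, Nat.add_sub_cancel]
    ring
  have hfit : k + q + 1 ≤ n := by nlinarith
  rw [← hlen]
  -- the `t`-th block of size `k` is block `i = t + 1` of `SlideReducedBig`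
  refine profileHSVP_of_twin_chain (by omega) (by omega) ?_ ?_ ?_ ?_
  · exact (hsvpReduced_block_iff hB (by omega) (by omega) (by positivity) hlogη).mp hfirst
  · exact hfirstDual.profileDHSVP hB (by omega) (by omega) (by positivity) hlogη
  · intro t ht
    have hsl : k + q + t * k + k ≤ n := by
      have := Nat.mul_le_mul_right k (show t + 2 ≤ p by omega)
      nlinarith
    have h := hsvp (t + 1) (by omega) (by omega)
    rw [show (t + 1) * k + q = k + q + t * k by ring] at h
    exact (hsvpReduced_block_iff hB hsl (by omega) (by positivity) hlogδγ).mp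
      (h.hsvpReduced hHk (linearIndependent_block hB hsl) hδ.le)
  · intro t ht
    have hsl : k + q + t * k + 1 + k ≤ n := by
      have := Nat.mul_le_mul_right k (show t + 3 ≤ p by omega)
      nlinarith
    have h := (hdsvp (t + 1) (by omega) (by omega)).1
    rw [show (t + 1) * k + q + 1 = k + q + t * k + 1 by ring] at h
    exact DHSVPReduced.profileDHSVP hB hsl (by omega) (by positivity) hlogδγ
      (h.hsvpReduced hHk (linearIndependent_revDual (det_gram_ne_zero
        (gsoVec_block_ne_zero hB hsl))) hδ.le)

theorem slide_big_hsvp_general {m k q p n : ℕ} (hp : 2 ≤ p) (hk : 2 ≤ k)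
    (hn : n = p * k + q) {δ γk : ℝ} (hδ : 1 ≤ δ) (hγk : 1 ≤ γk)
    (hHk : IsHermiteBound γk k)
    (B : ℕ → Euc m) (hB : LinearIndependent ℝ (fun i : Fin n => B i))
    (hslide : SlideReducedBig δ γk k q p B) :
    ‖B 0‖ ≤ (δ ^ 2 * γk) ^ (((n : ℝ) - 1) / (2 * ((k : ℝ) - 1))) * volB B n ^ ((1 : ℝ) / n) := by
  have hδ0 : 0 < δ := by linarith
  have hγk0 : 0 < γk := by linarith
  have hprofile := hslide.profileHSVP hp hk hn hδ0 hγk0 hHk hB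
  have h := (hsvpReduced_block_iff hB (a := 0) (by omega) (by nlinarith) (by positivity)
    (log_rpow_sub_one_div (by positivity) (sub_one_ne_zero_of_two_le hk) n)).mpr hprofile
  rwa [HSVPReduced, block_zero] at h

/-- a `(δ,k)`-slide-reduced basis (case `n = pk + q ≥ 2k`) satisfies
`‖b_1‖ ≤ (δ²γ_k)^{(n-1)/(2(k-1))} vol(L)^{1/n}`. -/
theorem slide_big_hsvp {m k q p n : ℕ} (hp : 2 ≤ p) (hk : 2 ≤ k) (hq : q ≤ k - 1)
    (hn : n = p * k + q) {δ γk : ℝ} (hδ : 1 ≤ δ) (hγk : 1 ≤ γk)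
    (hHk : IsHermiteBound γk k)
    (B : ℕ → Euc m) (hB : LinearIndependent ℝ (fun i : Fin n => B i))
    (hslide : SlideReducedBig δ γk k q p B) :
    ‖B 0‖ ≤ (δ ^ 2 * γk) ^ (((n : ℝ) - 1) / (2 * ((k : ℝ) - 1))) * volB B n ^ ((1 : ℝ) / n) :=
  slide_big_hsvp_general hp hk hn hδ hγk hHk B hB hslide

end
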